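/- (Residual bound via path coverage.) Let 𝒟 be a probability distribution over (x,y) ∈ ℝ^d × {0,1} with E[x_l²] ≤ B_X² for all coordinates l. Let S_1, …, S_k ⊆ {1,…,d} be feature subsets with ∪_{i=1}^k S_i = {1,…,d}, and let p_1, …, p_k (with logits z_1, …, z_k) be produced by the sequential logit-passing protocol, each agent's minimizer assumed to exist. Let z_g(x) = Σ_{l=1}^d α_l x_l with Σ_{l=1}^d |α_l| ≤ B_g, and let ε ≥ L(p_1) − L(p_k), where L denotes expected BCE loss. Then |E[(p_k(x) − y) z_g(x)]| ≤ B_g · B_X · √(kε/2). -/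

import Mathlib

open MeasureTheory ProbabilityTheory

/-- The sigmoid (logistic) function `σ(z) = 1 / (1 + e^{-z})`. -/
noncomputable def sigmoid (z : ℝ) : ℝ := 1 / (1 + Real.exp (-z))

/-- The expected BCE loss `L(σ∘z) = E[log(1+e^{z(x)}) − y·z(x)]` of a logit function `z`. -/
noncomputable def bceLossFn {d : ℕ} (μ : Measure ((Fin d → ℝ) × ℝ))
    (z : (Fin d → ℝ) → ℝ) : ℝ :=
  ∫ q, (Real.log (1 + Real.exp (z q.1)) - q.2 * z q.1) ∂μ

/-- The logits of the sequential logit-passing protocol: `z_0 ≡ 0` and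
`z_{i+1}(x) = w_iᵀ x + v_i z_i(x)`. -/
noncomputable def seqLogit {d : ℕ} (w : ℕ → Fin d → ℝ) (v : ℕ → ℝ) :
    ℕ → (Fin d → ℝ) → ℝ
  | 0 => fun _ => 0
  | (i + 1) => fun x => (∑ l, w i l * x l) + v i * seqLogit w v i x

/-! Agent `i`'s logit `z_{i+1}` minimizes the loss over a space containing `z_i` and the
features `S i`, so its residual `σ(z_{i+1}) - y` is orthogonal to both. Orthogonality to
`z_i - z_{i+1}` and the co-coercivity `(σ b - σ a)² ≤ ½ (softplus b - softplus a - σ a (b - a))`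
of the ¼-smooth convex softplus turn the loss decrease of each step into an `L²` bound on the
change of prediction `σ(z_{i+1}) - σ(z_i)`; these bounds sum to at most `ε / 2`. A feature `x_l`
seen by agent `i` is orthogonal to the residual of `z_{i+1}`, so `E[(p_k - y) x_l]` is a sum of
at most `k` later changes of prediction tested against `x_l`, and Cauchy–Schwarz bounds it by
`B_X √(k ε / 2)`. The bound for `z_g` follows by linearity. -/

theorem le_of_hasDerivAt_of_nonpos_of_nonneg {φ φ' : ℝ → ℝ} {a : ℝ}
    (hφ : ∀ x, HasDerivAt φ (φ' x) x) (hle : ∀ x ≤ a, φ' x ≤ 0)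
    (hge : ∀ x, a ≤ x → 0 ≤ φ' x) (b : ℝ) : φ a ≤ φ b := by
  have hc : Continuous φ := continuous_iff_continuousAt.2 fun x => (hφ x).continuousAt
  rcases le_total a b with hab | hba
  · refine monotoneOn_of_hasDerivWithinAt_nonneg (convex_Ici a) hc.continuousOn
      (fun x _ => (hφ x).hasDerivWithinAt) (fun x hx => hge x (interior_subset hx))
      (Set.mem_Ici.2 le_rfl) hab hab
  · exact antitoneOn_of_hasDerivWithinAt_nonpos (convex_Iic a) hc.continuousOn
      (fun x _ => (hφ x).hasDerivWithinAt) (fun x hx => hle x (interior_subset hx : x ∈ Set.Iic a))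
      hba (Set.mem_Iic.2 le_rfl) hba

section SmoothConvex

variable {f f' : ℝ → ℝ} (hf : ∀ x, HasDerivAt f (f' x) x)
include hf

theorem add_deriv_mul_sub_le_of_monotone (hmono : Monotone f') (a b : ℝ) :
    f a + f' a * (b - a) ≤ f b := by
  have hφ : ∀ x, HasDerivAt (fun x => f x - f' a * (x - a)) (f' x - f' a) x := fun x => by
    simpa using (hf x).fun_sub (((hasDerivAt_id' x).sub_const a).const_mul (f' a))
  have := le_of_hasDerivAt_of_nonpos_of_nonneg hφ (fun x hx => sub_nonpos.2 (hmono hx))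
    (fun x hx => sub_nonneg.2 (hmono hx)) b
  simp only [sub_self, mul_zero, sub_zero] at this
  linarith

theorem le_add_deriv_mul_sub_add_sq {L : ℝ} (hlip : ∀ x y, x ≤ y → f' y - f' x ≤ L * (y - x))
    (a b : ℝ) : f b ≤ f a + f' a * (b - a) + L / 2 * (b - a) ^ 2 := by
  have hφ : ∀ x, HasDerivAt (fun x => f a + f' a * (x - a) + L / 2 * (x - a) ^ 2 - f x)
      (f' a + L * (x - a) - f' x) x := fun x => by
    have h := (hasDerivAt_id' x).sub_const a
    refine ((((h.const_mul (f' a)).const_add (f a)).fun_add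
      ((h.fun_pow 2).const_mul (L / 2))).fun_sub (hf x)).congr_deriv ?_
    norm_num
    ring
  have := le_of_hasDerivAt_of_nonpos_of_nonneg hφ (fun x hx => by linarith [hlip x a hx])
    (fun x hx => by linarith [hlip a x hx]) b
  norm_num at this
  linarith

/-- Co-coercivity: compare `f` at `b - (f' b - f' a) / L` with the tangent at `a` and the
quadratic upper bound at `b`. -/
theorem sq_deriv_sub_le_of_monotone {L : ℝ} (hL : 0 < L) (hmono : Monotone f')
    (hlip : ∀ x y, x ≤ y → f' y - f' x ≤ L * (y - x)) (a b : ℝ) :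
    (f' b - f' a) ^ 2 ≤ 2 * L * (f b - f a - f' a * (b - a)) := by
  set t := (f' b - f' a) / L
  have ht : f' b = f' a + L * t := by simp only [t, mul_div_cancel₀ _ hL.ne']; ring
  have hlow := add_deriv_mul_sub_le_of_monotone hf hmono a (b - t)
  have hup := le_add_deriv_mul_sub_add_sq hf hlip b (b - t)
  have key : L * t ^ 2 / 2 ≤ f b - f a - f' a * (b - a) := by
    rw [ht] at hup
    nlinarith
  rw [ht, add_sub_cancel_left]
  nlinarith

end SmoothConvex

noncomputable def softplus (z : ℝ) : ℝ := Real.log (1 + Real.exp z)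

theorem sigmoid_eq_real_sigmoid : sigmoid = Real.sigmoid :=
  funext fun z => one_div (1 + Real.exp (-z))

theorem hasDerivAt_softplus (z : ℝ) : HasDerivAt softplus (Real.sigmoid z) z := by
  have h := ((Real.hasDerivAt_exp z).const_add 1).log (by positivity)
  convert h using 1
  · rfl
  rw [Real.sigmoid_def, Real.exp_neg]
  field_simp
  ring

theorem continuous_softplus : Continuous softplus :=
  continuous_iff_continuousAt.2 fun z => (hasDerivAt_softplus z).continuousAt

theorem abs_softplus_le (z : ℝ) : |softplus z| ≤ Real.log 2 + |z| := by
  have hexp : 1 + Real.exp z ≤ 2 * Real.exp |z| := by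
    linarith [Real.one_le_exp (abs_nonneg z), Real.exp_le_exp.2 (le_abs_self z)]
  rw [abs_of_nonneg (show 0 ≤ softplus z from Real.log_nonneg (by linarith [Real.exp_pos z]))]
  calc softplus z ≤ Real.log (2 * Real.exp |z|) := Real.log_le_log (by positivity) hexp
    _ = Real.log 2 + |z| := by rw [Real.log_mul two_ne_zero (Real.exp_ne_zero _), Real.log_exp]

theorem Real.abs_sigmoid_sub_le_one (a b : ℝ) : |Real.sigmoid a - Real.sigmoid b| ≤ 1 :=
  abs_sub_le_iff.2 ⟨by linarith [Real.sigmoid_lt_one a, Real.sigmoid_pos b],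
    by linarith [Real.sigmoid_lt_one b, Real.sigmoid_pos a]⟩

theorem Real.sigmoid_sub_le {x y : ℝ} (hxy : x ≤ y) :
    Real.sigmoid y - Real.sigmoid x ≤ 1 / 4 * (y - x) := by
  have hmono : Monotone fun z => 1 / 4 * z - Real.sigmoid z :=
    monotone_of_hasDerivAt_nonneg
      (fun z => ((hasDerivAt_id' z).const_mul (1 / 4)).fun_sub (Real.hasDerivAt_sigmoid z))
      fun z => by
        simp only [Pi.zero_apply]
        nlinarith [sq_nonneg (Real.sigmoid z - 1 / 2)]
  linarith [hmono hxy]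

theorem softplus_le_add_sigmoid_mul_add_sq (a b : ℝ) :
    softplus b ≤ softplus a + Real.sigmoid a * (b - a) + 1 / 8 * (b - a) ^ 2 := by
  have := le_add_deriv_mul_sub_add_sq hasDerivAt_softplus (fun _ _ => Real.sigmoid_sub_le) a b
  norm_num at this ⊢
  linarith

theorem sq_sigmoid_sub_le_softplus_sub (a b : ℝ) :
    (Real.sigmoid b - Real.sigmoid a) ^ 2
      ≤ 1 / 2 * (softplus b - softplus a - Real.sigmoid a * (b - a)) := by
  have := sq_deriv_sub_le_of_monotone hasDerivAt_softplus (by norm_num : (0 : ℝ) < 1 / 4)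
    Real.sigmoid_monotone (fun _ _ => Real.sigmoid_sub_le) a b
  linarith

theorem abs_integral_mul_le_sqrt_mul_sqrt {Ω : Type*} [MeasurableSpace Ω] {ν : Measure Ω}
    {f g : Ω → ℝ} (hf : MemLp f 2 ν) (hg : MemLp g 2 ν) :
    |∫ ω, f ω * g ω ∂ν| ≤ √(∫ ω, f ω ^ 2 ∂ν) * √(∫ ω, g ω ^ 2 ∂ν) := by
  have h2 : (2 : ENNReal) = ENNReal.ofReal 2 := by norm_num
  have hH := integral_mul_norm_le_Lp_mul_Lq Real.HolderConjugate.two_two (h2 ▸ hf) (h2 ▸ hg)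
  simp only [Real.norm_eq_abs, Real.rpow_two, sq_abs, ← Real.sqrt_eq_rpow] at hH
  calc |∫ ω, f ω * g ω ∂ν| ≤ ∫ ω, |f ω * g ω| ∂ν := abs_integral_le_integral_abs
    _ = ∫ ω, |f ω| * |g ω| ∂ν := by simp_rw [abs_mul]
    _ ≤ _ := hH

theorem abs_integral_sum_mul_le {ι Ω : Type*} [MeasurableSpace Ω] {ν : Measure Ω}
    (s : Finset ι) {f : ι → Ω → ℝ} {g : Ω → ℝ} (hf : ∀ j ∈ s, MemLp (f j) 2 ν)
    (hg : MemLp g 2 ν) :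
    |∫ ω, (∑ j ∈ s, f j ω) * g ω ∂ν|
      ≤ √(s.card * ∑ j ∈ s, ∫ ω, f j ω ^ 2 ∂ν) * √(∫ ω, g ω ^ 2 ∂ν) := by
  simp_rw [Finset.sum_mul]
  rw [integral_finsetSum s (f := fun j ω => f j ω * g ω) fun j hj => (hf j hj).integrable_mul hg]
  calc |∑ j ∈ s, ∫ ω, f j ω * g ω ∂ν|
      ≤ ∑ j ∈ s, √1 * √(∫ ω, f j ω ^ 2 ∂ν) * √(∫ ω, g ω ^ 2 ∂ν) := by
        refine (Finset.abs_sum_le_sum_abs _ _).trans (Finset.sum_le_sum fun j hj => ?_)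
        rw [Real.sqrt_one, one_mul]
        exact abs_integral_mul_le_sqrt_mul_sqrt (hf j hj) hg
    _ ≤ √(∑ j ∈ s, 1) * √(∑ j ∈ s, ∫ ω, f j ω ^ 2 ∂ν) * √(∫ ω, g ω ^ 2 ∂ν) := by
        rw [← Finset.sum_mul]
        gcongr
        exact Real.sum_sqrt_mul_sqrt_le s (fun _ => zero_le_one)
          fun j => integral_nonneg fun _ => sq_nonneg _
    _ = _ := by rw [Finset.sum_const, nsmul_one, Real.sqrt_mul (Nat.cast_nonneg _)]

theorem abs_integral_mul_sum_le {ι Ω : Type*} [Fintype ι] [MeasurableSpace Ω] {ν : Measure Ω}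
    {r : Ω → ℝ} {X : ι → Ω → ℝ} (α : ι → ℝ) {M : ℝ}
    (hX : ∀ l, Integrable (fun ω => r ω * X l ω) ν) (hM : ∀ l, |∫ ω, r ω * X l ω ∂ν| ≤ M) :
    |∫ ω, r ω * ∑ l, α l * X l ω ∂ν| ≤ (∑ l, |α l|) * M := by
  simp_rw [Finset.mul_sum, mul_left_comm (r _)]
  rw [integral_finsetSum _ fun l _ => (hX l).const_mul (α l), Finset.sum_mul]
  refine (Finset.abs_sum_le_sum_abs _ _).trans (Finset.sum_le_sum fun l _ => ?_)
  rw [integral_const_mul, abs_mul]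
  exact mul_le_mul_of_nonneg_left (hM l) (abs_nonneg _)

section LinearLogits

variable {d : ℕ} {μ : Measure ((Fin d → ℝ) × ℝ)}

theorem bceLossFn_eq_integral_softplus (z : (Fin d → ℝ) → ℝ) :
    bceLossFn μ z = ∫ q, (softplus (z q.1) - q.2 * z q.1) ∂μ := rfl

variable (hy : ∀ᵐ q ∂μ, q.2 ∈ Set.Icc (0 : ℝ) 1)
include hy

theorem integrable_bce_integrand [IsFiniteMeasure μ] {z : (Fin d → ℝ) → ℝ}
    (hz : Integrable (fun q => z q.1) μ) :
    Integrable (fun q => softplus (z q.1) - q.2 * z q.1) μ := by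
  refine Integrable.mono' ((integrable_const (Real.log 2)).add (hz.abs.const_mul 2))
    ((continuous_softplus.comp_aestronglyMeasurable hz.1).sub
      (continuous_snd.aestronglyMeasurable.mul hz.1)) ?_
  filter_upwards [hy] with q hq
  have hyz : |q.2 * z q.1| ≤ |z q.1| := by
    rw [abs_mul]
    exact mul_le_of_le_one_left (abs_nonneg _) (abs_le.2 ⟨by linarith [hq.1], hq.2⟩)
  calc ‖softplus (z q.1) - q.2 * z q.1‖ ≤ |softplus (z q.1)| + |q.2 * z q.1| := abs_sub _ _
    _ ≤ Real.log 2 + 2 * |z q.1| := by linarith [abs_softplus_le (z q.1)]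

theorem integrable_residual_mul {z g : (Fin d → ℝ) → ℝ}
    (hz : AEStronglyMeasurable (fun q => z q.1) μ) (hg : Integrable (fun q => g q.1) μ) :
    Integrable (fun q => (Real.sigmoid (z q.1) - q.2) * g q.1) μ := by
  refine hg.bdd_mul ((continuous_sigmoid.comp_aestronglyMeasurable hz).sub
    continuous_snd.aestronglyMeasurable) (c := 1) ?_
  filter_upwards [hy] with q hq
  rw [Real.norm_eq_abs, abs_le]
  constructor <;> linarith [Real.sigmoid_pos (z q.1), Real.sigmoid_lt_one (z q.1), hq.1, hq.2]

variable [IsFiniteMeasure μ]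

theorem bceLossFn_add_mul_le {z g : (Fin d → ℝ) → ℝ} (hz : MemLp (fun q => z q.1) 2 μ)
    (hg : MemLp (fun q => g q.1) 2 μ) (t : ℝ) :
    bceLossFn μ (fun x => z x + t * g x)
      ≤ bceLossFn μ z + t * ∫ q, (Real.sigmoid (z q.1) - q.2) * g q.1 ∂μ
        + t ^ 2 / 8 * ∫ q, g q.1 ^ 2 ∂μ := by
  have hz1 := hz.integrable one_le_two
  have hg1 := hg.integrable one_le_two
  have hbce := integrable_bce_integrand hy hz1
  have hr := (integrable_residual_mul hy hz1.1 hg1).const_mul t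
  have hbr : Integrable (fun q => softplus (z q.1) - q.2 * z q.1
      + t * ((Real.sigmoid (z q.1) - q.2) * g q.1)) μ := hbce.add hr
  have hg2 := hg.integrable_sq.const_mul (t ^ 2 / 8)
  calc bceLossFn μ (fun x => z x + t * g x)
      = ∫ q, (softplus (z q.1 + t * g q.1) - q.2 * (z q.1 + t * g q.1)) ∂μ := rfl
    _ ≤ ∫ q, (softplus (z q.1) - q.2 * z q.1
          + t * ((Real.sigmoid (z q.1) - q.2) * g q.1) + t ^ 2 / 8 * g q.1 ^ 2) ∂μ :=
        integral_mono
          (integrable_bce_integrand hy (z := fun x => z x + t * g x) (hz1.add (hg1.const_mul t)))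
          (hbr.add hg2) fun q => by
            linear_combination softplus_le_add_sigmoid_mul_add_sq (z q.1) (z q.1 + t * g q.1)
    _ = _ := by
        rw [integral_add hbr hg2, integral_add hbce hr, integral_const_mul, integral_const_mul,
          bceLossFn_eq_integral_softplus]

theorem integral_residual_mul_eq_zero_of_le {z g : (Fin d → ℝ) → ℝ}
    (hz : MemLp (fun q => z q.1) 2 μ) (hg : MemLp (fun q => g q.1) 2 μ)
    (hmin : ∀ t : ℝ, bceLossFn μ z ≤ bceLossFn μ (fun x => z x + t * g x)) :
    ∫ q, (Real.sigmoid (z q.1) - q.2) * g q.1 ∂μ = 0 := by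
  -- a quadratic in `t` with no constant term is nonnegative only if its linear coefficient is 0
  have hquad : ∀ t : ℝ, 0 ≤ (∫ q, g q.1 ^ 2 ∂μ) / 8 * (t * t)
      + (∫ q, (Real.sigmoid (z q.1) - q.2) * g q.1 ∂μ) * t + 0 := fun t => by
    linarith [hmin t, bceLossFn_add_mul_le hy hz hg t]
  have := discrim_le_zero hquad
  rw [discrim, mul_zero, sub_zero] at this
  exact pow_eq_zero_iff (n := 2) two_ne_zero |>.1 (le_antisymm this (sq_nonneg _))

theorem integral_sq_sigmoid_sub_le {z z' : (Fin d → ℝ) → ℝ}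
    (hz : Integrable (fun q => z q.1) μ) (hz' : Integrable (fun q => z' q.1) μ)
    (horth : ∫ q, (Real.sigmoid (z' q.1) - q.2) * (z q.1 - z' q.1) ∂μ = 0) :
    ∫ q, (Real.sigmoid (z' q.1) - Real.sigmoid (z q.1)) ^ 2 ∂μ
      ≤ (bceLossFn μ z - bceLossFn μ z') / 2 := by
  have hr := integrable_residual_mul hy (g := fun x => z x - z' x) hz'.1 (hz.sub hz')
  have hbz := integrable_bce_integrand hy hz
  have hbz' := integrable_bce_integrand hy hz'
  have hbce : Integrable (fun q => (softplus (z q.1) - q.2 * z q.1)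
      - (softplus (z' q.1) - q.2 * z' q.1)) μ := hbz.sub hbz'
  calc ∫ q, (Real.sigmoid (z' q.1) - Real.sigmoid (z q.1)) ^ 2 ∂μ
      ≤ ∫ q, 1 / 2 * ((softplus (z q.1) - q.2 * z q.1) - (softplus (z' q.1) - q.2 * z' q.1)
          - (Real.sigmoid (z' q.1) - q.2) * (z q.1 - z' q.1)) ∂μ := by
        refine integral_mono_of_nonneg (ae_of_all _ fun _ => sq_nonneg _)
          ((hbce.sub hr).const_mul _) (ae_of_all _ fun q => ?_)
        beta_reduce
        rw [sub_sq_comm]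
        linear_combination sq_sigmoid_sub_le_softplus_sub (z' q.1) (z q.1)
    _ = (bceLossFn μ z - bceLossFn μ z') / 2 := by
        rw [integral_const_mul, integral_sub hbce hr, integral_sub hbz hbz', horth]
        simp only [bceLossFn_eq_integral_softplus]
        ring

end LinearLogits

section Protocol

variable {d : ℕ}

/-- Agents are indexed `0, …, k - 1` (the paper's `1, …, k`): agent `i` sees the features
`S i` and produces the logit `seqLogit w v (i + 1)`. -/
structure IsLogitPassing (μ : Measure ((Fin d → ℝ) × ℝ)) (S : ℕ → Finset (Fin d)) (k : ℕ)
    (w : ℕ → Fin d → ℝ) (v : ℕ → ℝ) : Prop where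
  support : ∀ i < k, ∀ l ∉ S i, w i l = 0
  isMin : ∀ i < k, ∀ w' : Fin d → ℝ, (∀ l ∉ S i, w' l = 0) → ∀ v' : ℝ,
    bceLossFn μ (seqLogit w v (i + 1))
      ≤ bceLossFn μ (fun x => (∑ l, w' l * x l) + v' * seqLogit w v i x)

variable {μ : Measure ((Fin d → ℝ) × ℝ)}
  (hX : ∀ l, MemLp (fun q : (Fin d → ℝ) × ℝ => q.1 l) 2 μ)
include hX

theorem memLp_sum_mul_coord (u : Fin d → ℝ) : MemLp (fun q => ∑ l, u l * q.1 l) 2 μ :=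
  memLp_finsetSum _ fun l _ => (hX l).const_mul (u l)

theorem memLp_seqLogit [IsFiniteMeasure μ] (w : ℕ → Fin d → ℝ) (v : ℕ → ℝ) :
    ∀ i, MemLp (fun q => seqLogit w v i q.1) 2 μ
  | 0 => memLp_const 0
  | i + 1 => (memLp_sum_mul_coord hX (w i)).add ((memLp_seqLogit w v i).const_mul (v i))

namespace IsLogitPassing

variable [IsFiniteMeasure μ] {S : ℕ → Finset (Fin d)} {k : ℕ} {w : ℕ → Fin d → ℝ} {v : ℕ → ℝ}
  (hP : IsLogitPassing μ S k w v) (hy : ∀ᵐ q ∂μ, q.2 ∈ Set.Icc (0 : ℝ) 1)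
include hP hy

theorem integral_residual_mul_eq_zero {i : ℕ} (hi : i < k) {u : Fin d → ℝ}
    (hu : ∀ l ∉ S i, u l = 0) (s : ℝ) :
    ∫ q, (Real.sigmoid (seqLogit w v (i + 1) q.1) - q.2)
      * ((∑ l, u l * q.1 l) + s * seqLogit w v i q.1) ∂μ = 0 := by
  refine integral_residual_mul_eq_zero_of_le hy (memLp_seqLogit hX w v _)
    (g := fun x => (∑ l, u l * x l) + s * seqLogit w v i x)
    ((memLp_sum_mul_coord hX u).add ((memLp_seqLogit hX w v i).const_mul s)) fun t => ?_
  have hw : ∀ l ∉ S i, w i l + t * u l = 0 := fun l hl => by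
    rw [hP.support i hi l hl, hu l hl]; ring
  convert hP.isMin i hi _ hw (v i + t * s) using 2
  funext x
  simp only [seqLogit, add_mul, Finset.sum_add_distrib, mul_assoc, ← Finset.mul_sum]
  ring

theorem integral_sq_sigmoid_succ_sub_le {j : ℕ} (hj : j < k) :
    ∫ q, (Real.sigmoid (seqLogit w v (j + 1) q.1) - Real.sigmoid (seqLogit w v j q.1)) ^ 2 ∂μ
      ≤ (bceLossFn μ (seqLogit w v j) - bceLossFn μ (seqLogit w v (j + 1))) / 2 := by
  refine integral_sq_sigmoid_sub_le hy ((memLp_seqLogit hX w v j).integrable one_le_two)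
    ((memLp_seqLogit hX w v (j + 1)).integrable one_le_two) ?_
  have h := hP.integral_residual_mul_eq_zero hX hy hj (u := -w j)
    (fun l hl => by simp [hP.support j hj l hl]) (1 - v j)
  rw [← h]
  congr with q
  simp only [seqLogit, Pi.neg_apply, neg_mul, Finset.sum_neg_distrib]
  ring

theorem sum_integral_sq_sigmoid_succ_sub_le (hk : 1 ≤ k) :
    ∑ j ∈ Finset.Ico 1 k,
        ∫ q, (Real.sigmoid (seqLogit w v (j + 1) q.1) - Real.sigmoid (seqLogit w v j q.1)) ^ 2 ∂μ
      ≤ (bceLossFn μ (seqLogit w v 1) - bceLossFn μ (seqLogit w v k)) / 2 := by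
  refine (Finset.sum_le_sum fun j hj =>
    hP.integral_sq_sigmoid_succ_sub_le hX hy (Finset.mem_Ico.1 hj).2).trans_eq ?_
  rw [← Finset.sum_div, ← neg_sub (bceLossFn μ (seqLogit w v k)),
    ← Finset.sum_Ico_sub (fun j => bceLossFn μ (seqLogit w v j)) hk, ← Finset.sum_neg_distrib]
  simp only [neg_sub]

theorem abs_integral_residual_mul_coord_le {l : Fin d} (hl : ∃ i < k, l ∈ S i) :
    |∫ q, (Real.sigmoid (seqLogit w v k q.1) - q.2) * q.1 l ∂μ|
      ≤ √(k * ((bceLossFn μ (seqLogit w v 1) - bceLossFn μ (seqLogit w v k)) / 2))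
        * √(∫ q, q.1 l ^ 2 ∂μ) := by
  obtain ⟨i, hi, hli⟩ := hl
  set p : ℕ → (Fin d → ℝ) × ℝ → ℝ := fun j q => Real.sigmoid (seqLogit w v j q.1)
  have hpath : ∀ q, p k q - q.2
      = (p (i + 1) q - q.2) + ∑ j ∈ Finset.Ico (i + 1) k, (p (j + 1) q - p j q) := fun q => by
    rw [Finset.sum_Ico_sub (fun j => p j q) hi]; ring
  have horth : ∫ q, (p (i + 1) q - q.2) * q.1 l ∂μ = 0 := by
    simpa [Pi.single_apply] using hP.integral_residual_mul_eq_zero hX hy hi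
      (u := Pi.single l 1) (fun m hm => Pi.single_eq_of_ne (by rintro rfl; exact hm hli) _) 0
  have hstep : ∀ j, MemLp (fun q => p (j + 1) q - p j q) 2 μ := fun j =>
    MemLp.of_bound (((continuous_sigmoid.comp_aestronglyMeasurable
      (memLp_seqLogit hX w v (j + 1)).1).sub
        (continuous_sigmoid.comp_aestronglyMeasurable (memLp_seqLogit hX w v j).1))) 1
      (ae_of_all _ fun q => Real.abs_sigmoid_sub_le_one _ _)
  have hsum : Integrable
      (fun q => (∑ j ∈ Finset.Ico (i + 1) k, (p (j + 1) q - p j q)) * q.1 l) μ :=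
    (memLp_finsetSum _ fun j _ => hstep j).integrable_mul (hX l)
  calc |∫ q, (p k q - q.2) * q.1 l ∂μ|
      = |∫ q, (∑ j ∈ Finset.Ico (i + 1) k, (p (j + 1) q - p j q)) * q.1 l ∂μ| := by
        simp_rw [hpath, add_mul]
        rw [integral_add (integrable_residual_mul hy (g := fun x => x l)
          (memLp_seqLogit hX w v (i + 1)).1 ((hX l).integrable one_le_two)) hsum, horth, zero_add]
    _ ≤ √((Finset.Ico (i + 1) k).card
          * ∑ j ∈ Finset.Ico (i + 1) k, ∫ q, (p (j + 1) q - p j q) ^ 2 ∂μ)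
        * √(∫ q, q.1 l ^ 2 ∂μ) :=
      abs_integral_sum_mul_le _ (fun j _ => hstep j) (hX l)
    _ ≤ _ := by
        gcongr
        · exact_mod_cast (Nat.card_Ico _ _).trans_le (Nat.sub_le _ _)
        · refine (Finset.sum_le_sum_of_subset_of_nonneg
            (Finset.Ico_subset_Ico (Nat.le_add_left 1 i) le_rfl)
            fun j _ _ => integral_nonneg fun _ => sq_nonneg _).trans ?_
          exact hP.sum_integral_sq_sigmoid_succ_sub_le hX hy (by omega)

end IsLogitPassing

end Protocol

theorem residual_bound_via_path_coverage_general
    {d : ℕ} (μ : Measure ((Fin d → ℝ) × ℝ)) [IsProbabilityMeasure μ]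
    (hy : ∀ᵐ q ∂μ, q.2 = 0 ∨ q.2 = 1)
    (BX : ℝ) (hBX : 0 ≤ BX)
    (hX2int : ∀ l : Fin d, Integrable (fun q : (Fin d → ℝ) × ℝ => (q.1 l) ^ 2) μ)
    (hX2 : ∀ l : Fin d, ∫ q, (q.1 l) ^ 2 ∂μ ≤ BX ^ 2)
    (k : ℕ) (S : ℕ → Finset (Fin d))
    (hcov : ∀ l : Fin d, ∃ i < k, l ∈ S i)
    (w : ℕ → Fin d → ℝ) (v : ℕ → ℝ)
    (hsupp : ∀ i < k, ∀ l ∉ S i, w i l = 0)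
    (hmin : ∀ i < k, ∀ w' : Fin d → ℝ, (∀ l ∉ S i, w' l = 0) → ∀ v' : ℝ,
      bceLossFn μ (seqLogit w v (i + 1))
        ≤ bceLossFn μ (fun x => (∑ l, w' l * x l) + v' * seqLogit w v i x))
    (Bg : ℝ) (α : Fin d → ℝ) (hα : ∑ l, |α l| ≤ Bg)
    (ε : ℝ) (hε : bceLossFn μ (seqLogit w v 1) - bceLossFn μ (seqLogit w v k) ≤ ε) :
    |∫ q, (sigmoid (seqLogit w v k q.1) - q.2) * (∑ l, α l * q.1 l) ∂μ|
      ≤ Bg * BX * Real.sqrt (k * ε / 2) := by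
  have hy' : ∀ᵐ q ∂μ, q.2 ∈ Set.Icc (0 : ℝ) 1 :=
    hy.mono fun q hq => by rcases hq with h | h <;> simp [h]
  have hX : ∀ l, MemLp (fun q : (Fin d → ℝ) × ℝ => q.1 l) 2 μ := fun l =>
    (memLp_two_iff_integrable_sq (by fun_prop)).2 (hX2int l)
  have hP : IsLogitPassing μ S k w v := ⟨hsupp, hmin⟩
  have hcoord : ∀ l, |∫ q, (Real.sigmoid (seqLogit w v k q.1) - q.2) * q.1 l ∂μ|
      ≤ BX * √(k * ε / 2) := fun l => by
    refine (hP.abs_integral_residual_mul_coord_le hX hy' (hcov l)).trans ?_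
    rw [mul_comm BX, mul_div_assoc]
    gcongr
    exact (Real.sqrt_le_sqrt (hX2 l)).trans_eq (Real.sqrt_sq hBX)
  rw [sigmoid_eq_real_sigmoid, mul_assoc]
  refine (abs_integral_mul_sum_le α (fun l => integrable_residual_mul hy' (g := fun x => x l)
    (memLp_seqLogit hX w v k).1 ((hX l).integrable one_le_two)) hcoord).trans ?_
  gcongr

/-- Residual bound via path coverage: for the sequential logit-passing protocol on
feature subsets `S_1, …, S_k` covering all `d` features, any linear logit
`z_g(x) = Σ_l α_l x_l` with `Σ_l |α_l| ≤ B_g`, second moments `E[x_l²] ≤ B_X²`, and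
`ε ≥ L(p_1) − L(p_k)`, we have `|E[(p_k(x) − y) z_g(x)]| ≤ B_g B_X √(kε/2)`. -/
theorem residual_bound_via_path_coverage
    {d : ℕ} (μ : Measure ((Fin d → ℝ) × ℝ)) [IsProbabilityMeasure μ]
    (hy : ∀ᵐ q ∂μ, q.2 = 0 ∨ q.2 = 1)
    (BX : ℝ) (hBX : 0 ≤ BX)
    (hX2int : ∀ l : Fin d, Integrable (fun q : (Fin d → ℝ) × ℝ => (q.1 l) ^ 2) μ)
    (hX2 : ∀ l : Fin d, ∫ q, (q.1 l) ^ 2 ∂μ ≤ BX ^ 2)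
    (k : ℕ) (hk : 1 ≤ k) (S : ℕ → Finset (Fin d))
    (hcov : ∀ l : Fin d, ∃ i < k, l ∈ S i)
    (w : ℕ → Fin d → ℝ) (v : ℕ → ℝ)
    (hsupp : ∀ i < k, ∀ l ∉ S i, w i l = 0)
    (hmin : ∀ i < k, ∀ w' : Fin d → ℝ, (∀ l ∉ S i, w' l = 0) → ∀ v' : ℝ,
      bceLossFn μ (seqLogit w v (i + 1))
        ≤ bceLossFn μ (fun x => (∑ l, w' l * x l) + v' * seqLogit w v i x))
    (Bg : ℝ) (α : Fin d → ℝ) (hα : ∑ l, |α l| ≤ Bg)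
    (ε : ℝ) (hε : bceLossFn μ (seqLogit w v 1) - bceLossFn μ (seqLogit w v k) ≤ ε) :
    |∫ q, (sigmoid (seqLogit w v k q.1) - q.2) * (∑ l, α l * q.1 l) ∂μ|
      ≤ Bg * BX * Real.sqrt (k * ε / 2) :=
  residual_bound_via_path_coverage_general μ hy BX hBX hX2int hX2 k S hcov w v hsupp hmin Bg α hα ε
    hε
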